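/- Let m be a positive integer and p ∈ [0,1]. For integers t ≥ 2 define H(m,t+1) = p·(2mt+1-m)/(t(2mt+1-2m)) + (1-p)·m/(2mt) and K(m,t+1) = 1 - H(m,t+1). Then lim_{t→∞} 1/(t - (t-1)·K(m,t+1)^m) = 2/(2+m+mp). -/

import Mathlib

/-!
With `H = H(m,t+1)` one has `t·H → (1+p)/2`, so `H → 0`. Writing the denominator as
`t - (t-1)Kᵐ = t(1-K)(1 + K + ⋯ + K^(m-1)) + Kᵐ` with `1 - K = H`, it tends to
`(1+p)/2 · m + 1 = (2+m+mp)/2`.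
-/

open Filter Topology Finset

/-- `H(m,t+1)`, the attachment probability to a vertex of degree `m` at time `t`. -/
noncomputable def paApaH (m : ℕ) (p t : ℝ) : ℝ :=
  p * (2 * (m : ℝ) * t + 1 - m) / (t * (2 * (m : ℝ) * t + 1 - 2 * m))
    + (1 - p) * (m : ℝ) / (2 * (m : ℝ) * t)

lemma sub_sub_one_mul_pow_eq {R : Type*} [CommRing R] (t x : R) (m : ℕ) :
    t - (t - 1) * x ^ m = t * (1 - x) * ∑ i ∈ range m, x ^ i + x ^ m := by
  linear_combination t * (mul_neg_geom_sum x m).symm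

lemma tendsto_zero_of_tendsto_natCast_mul {h : ℕ → ℝ} {c : ℝ}
    (hh : Tendsto (fun t : ℕ => (t : ℝ) * h t) atTop (𝓝 c)) : Tendsto h atTop (𝓝 0) := by
  refine (hh.div_atTop tendsto_natCast_atTop_atTop).congr' ?_
  filter_upwards [eventually_ne_atTop 0] with t ht
  field_simp

lemma tendsto_sub_sub_one_mul_one_sub_pow {h : ℕ → ℝ} {c : ℝ}
    (hh : Tendsto (fun t : ℕ => (t : ℝ) * h t) atTop (𝓝 c)) (m : ℕ) :
    Tendsto (fun t : ℕ => (t : ℝ) - ((t : ℝ) - 1) * (1 - h t) ^ m) atTop (𝓝 (c * m + 1)) := by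
  have hK : Tendsto (fun t => 1 - h t) atTop (𝓝 1) := by
    simpa using tendsto_const_nhds.sub (tendsto_zero_of_tendsto_natCast_mul hh)
  have hsum : Tendsto (fun t => ∑ i ∈ range m, (1 - h t) ^ i) atTop (𝓝 m) := by
    simpa using tendsto_finsetSum (range m) fun i _ => hK.pow i
  have hlim := (hh.mul hsum).add (by simpa using hK.pow m)
  refine hlim.congr fun t => ?_
  rw [sub_sub_one_mul_pow_eq, sub_sub_cancel]

lemma natCast_mul_paApaH_eq {m : ℕ} (hm : 1 ≤ m) (p : ℝ) {t : ℝ} (ht : 1 ≤ t) :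
    t * paApaH m p t = p * (1 + m / (2 * m * t + 1 - 2 * m)) + (1 - p) / 2 := by
  have hm' : (1 : ℝ) ≤ m := by exact_mod_cast hm
  have hden : 2 * (m : ℝ) * t + 1 - 2 * m ≠ 0 := by nlinarith
  unfold paApaH
  rw [one_add_div hden]
  field_simp
  ring

lemma tendsto_natCast_mul_paApaH {m : ℕ} (hm : 1 ≤ m) (p : ℝ) :
    Tendsto (fun t : ℕ => (t : ℝ) * paApaH m p t) atTop (𝓝 ((1 + p) / 2)) := by
  have hm' : (0 : ℝ) < 2 * m := by positivity
  have hden : Tendsto (fun t : ℕ => 2 * (m : ℝ) * t + 1 - 2 * m) atTop atTop := by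
    simp only [add_sub_assoc]
    exact tendsto_atTop_add_const_right _ _ (tendsto_natCast_atTop_atTop.const_mul_atTop hm')
  have hlim := ((tendsto_const_nhds (x := (m : ℝ))).div_atTop hden).const_add 1
    |>.const_mul p |>.add_const ((1 - p) / 2)
  rw [add_zero, mul_one, show p + (1 - p) / 2 = (1 + p) / 2 by ring] at hlim
  refine hlim.congr' ?_
  filter_upwards [eventually_ge_atTop 1] with t ht
  rw [natCast_mul_paApaH_eq hm p (by exact_mod_cast ht)]

theorem pa_apa_stolz_cesaro_deg_m (m : ℕ) (hm : 1 ≤ m) (p : ℝ) (hp0 : 0 ≤ p) :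
    Tendsto (fun t : ℕ =>
      1 / ((t : ℝ) - ((t : ℝ) - 1) *
        (1 - (p * (2 * (m : ℝ) * t + 1 - m) / ((t : ℝ) * (2 * (m : ℝ) * t + 1 - 2 * m))
          + (1 - p) * (m : ℝ) / (2 * (m : ℝ) * t))) ^ m))
      atTop (nhds (2 / (2 + (m : ℝ) + (m : ℝ) * p))) := by
  have hne : (1 + p) / 2 * m + 1 ≠ 0 := by positivity
  have hlim := (tendsto_const_nhds (x := (1 : ℝ))).div
    (tendsto_sub_sub_one_mul_one_sub_pow (tendsto_natCast_mul_paApaH hm p) m) hne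
  rwa [show 1 / ((1 + p) / 2 * m + 1) = 2 / (2 + m + m * p) by field_simp; ring] at hlim
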